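/- If each edge crossed twice contributes 2 inner-segment incidences and each edge crossed three times contributes 4 inner-segment incidences, while specified cell types of sizes 3, 4, 4 (degenerate), 5, 5 have 3, 1, 4, 2, 5 inner-segment incidences respectively, and additionally each trail ending in a large cell contributes at least one further distinct incidence, then 2|E_2| + 4|E_3| ≥ 3T + Q + 4D + 2P5 + 5Y + (number of trails ending in large cells). -/
import Mathlib


open Finset

/-- Double counting incidences between inner edge-segments and cells:
the total number of incidences is `2|E₂| + 4|E₃|` (an edge with `k` crossings has `k-1`
inner segments, each incident to two cells).  Five pairwise disjoint families of cells,
of cardinalities `T, Q, D, P5, Y`, have exactly `3, 1, 4, 2, 5` inner-segment incidences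
each, and every trail ending in a large cell contributes a further incidence, pairwise
distinct and involving none of the cells of those five families.  Hence
`2|E₂| + 4|E₃| ≥ 3T + Q + 4D + 2P5 + 5Y + (#trails ending in large cells)`. -/
theorem inner_segment_double_count
    (Seg Cell : Type*) [Fintype Seg] [Fintype Cell] [DecidableEq Seg] [DecidableEq Cell]
    (I : Finset (Seg × Cell)) (E2 E3 : ℕ)
    (htot : I.card = 2 * E2 + 4 * E3)
    (T Q D P5 Y : Finset Cell)
    (hdisj : ∀ A ∈ ({T, Q, D, P5, Y} : Set (Finset Cell)),
        ∀ B ∈ ({T, Q, D, P5, Y} : Set (Finset Cell)), A ≠ B → Disjoint A B)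
    (hT : ∀ c ∈ T, (I.filter (fun p => p.2 = c)).card = 3)
    (hQ : ∀ c ∈ Q, (I.filter (fun p => p.2 = c)).card = 1)
    (hD : ∀ c ∈ D, (I.filter (fun p => p.2 = c)).card = 4)
    (hP5 : ∀ c ∈ P5, (I.filter (fun p => p.2 = c)).card = 2)
    (hY : ∀ c ∈ Y, (I.filter (fun p => p.2 = c)).card = 5)
    (Trail : Type*) [Fintype Trail]
    (tr : Trail → Seg × Cell)
    (htr : Function.Injective tr)
    (htrI : ∀ t, tr t ∈ I)
    (htrL : ∀ t, (tr t).2 ∉ T ∪ Q ∪ D ∪ P5 ∪ Y) :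
    3 * T.card + Q.card + 4 * D.card + 2 * P5.card + 5 * Y.card + Fintype.card Trail
      ≤ 2 * E2 + 4 * E3 := by
  classical
  set f : Cell → ℕ := fun c => (I.filter (fun p => p.2 = c)).card with hf
  set S : Finset Cell := T ∪ Q ∪ D ∪ P5 ∪ Y with hS
  -- pairwise disjointness from distinct counts
  have hd : ∀ (A B : Finset Cell) (a b : ℕ), (∀ c ∈ A, f c = a) → (∀ c ∈ B, f c = b) →
      a ≠ b → Disjoint A B := by
    intro A B a b hA hB hab
    refine Finset.disjoint_left.mpr ?_
    intro c hc1 hc2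
    exact hab (((hA _ hc1).symm.trans (hB _ hc2)))
  have hTQ := hd T Q 3 1 hT hQ (by norm_num)
  have hTD := hd T D 3 4 hT hD (by norm_num)
  have hTP := hd T P5 3 2 hT hP5 (by norm_num)
  have hTY := hd T Y 3 5 hT hY (by norm_num)
  have hQD := hd Q D 1 4 hQ hD (by norm_num)
  have hQP := hd Q P5 1 2 hQ hP5 (by norm_num)
  have hQY := hd Q Y 1 5 hQ hY (by norm_num)
  have hDP := hd D P5 4 2 hD hP5 (by norm_num)
  have hDY := hd D Y 4 5 hD hY (by norm_num)
  have hPY := hd P5 Y 2 5 hP5 hY (by norm_num)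
  -- the big set of incidences
  have hfdisj : ∀ c ∈ S, ∀ c' ∈ S, c ≠ c' →
      Disjoint (I.filter (fun p => p.2 = c)) (I.filter (fun p => p.2 = c')) := by
    intro c _ c' _ hcc
    refine Finset.disjoint_left.mpr ?_
    intro p hp1 hp2
    simp only [Finset.mem_filter] at hp1 hp2
    exact hcc (hp1.2.symm.trans hp2.2)
  have hcardB : (S.biUnion (fun c => I.filter (fun p => p.2 = c))).card = ∑ c ∈ S, f c :=
    Finset.card_biUnion hfdisj
  have hTrdisj : Disjoint (S.biUnion (fun c => I.filter (fun p => p.2 = c)))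
      (Finset.univ.image tr) := by
    refine Finset.disjoint_left.mpr ?_
    intro p hp hp'
    rcases Finset.mem_biUnion.mp hp with ⟨c, hcS, hpc⟩
    rcases Finset.mem_image.mp hp' with ⟨t, _, rfl⟩
    simp only [Finset.mem_filter] at hpc
    exact htrL t (hpc.2 ▸ hcS)
  have hsub : (S.biUnion (fun c => I.filter (fun p => p.2 = c))) ∪ Finset.univ.image tr ⊆ I := by
    intro p hp
    rcases Finset.mem_union.mp hp with hp | hp
    · rcases Finset.mem_biUnion.mp hp with ⟨c, _, hpc⟩
      exact (Finset.mem_filter.mp hpc).1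
    · rcases Finset.mem_image.mp hp with ⟨t, _, rfl⟩
      exact htrI t
  have hTrcard : (Finset.univ.image tr).card = Fintype.card Trail := by
    rw [Finset.card_image_of_injective _ htr, Finset.card_univ]
  -- split the sum over S
  have hsum : ∑ c ∈ S, f c
      = 3 * T.card + Q.card + 4 * D.card + 2 * P5.card + 5 * Y.card := by
    have h1 : Disjoint (T ∪ Q ∪ D ∪ P5) Y := by
      simp only [Finset.disjoint_union_left]
      exact ⟨⟨⟨hTY, hQY⟩, hDY⟩, hPY⟩
    have h2 : Disjoint (T ∪ Q ∪ D) P5 := by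
      simp only [Finset.disjoint_union_left]
      exact ⟨⟨hTP, hQP⟩, hDP⟩
    have h3 : Disjoint (T ∪ Q) D := by
      simp only [Finset.disjoint_union_left]
      exact ⟨hTD, hQD⟩
    rw [hS, Finset.sum_union h1, Finset.sum_union h2, Finset.sum_union h3,
      Finset.sum_union hTQ,
      Finset.sum_congr rfl hT, Finset.sum_congr rfl hQ, Finset.sum_congr rfl hD,
      Finset.sum_congr rfl hP5, Finset.sum_congr rfl hY]
    simp [Finset.sum_const, mul_comm]
  calc 3 * T.card + Q.card + 4 * D.card + 2 * P5.card + 5 * Y.card + Fintype.card Trail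
      = (S.biUnion (fun c => I.filter (fun p => p.2 = c)) ∪ Finset.univ.image tr).card := by
        rw [Finset.card_union_of_disjoint hTrdisj, hcardB, hsum, hTrcard]
    _ ≤ I.card := Finset.card_le_card hsub
    _ = 2 * E2 + 4 * E3 := htot
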